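/- Let Λ be a row-finite k-graph with no sources and finite Λ⁰, let Λ_I be the in-split of Λ at a vertex v with respect to a partition vΛ¹ = E₁ ∪ E₂ satisfying the pairing condition, and let A_n, B_n denote the vertex matrices of Λ and Λ_I respectively. Fix j ∈ {1,…,k} and define R ∈ M_{Λ⁰×Λ_I⁰}(ℕ) by R(u,w) := 1 if u = par(w) and 0 otherwise, and S ∈ M_{Λ_I⁰×Λ⁰}(ℕ) by S(u,w) := |Λ^{e_j}w ∩ E_i| if u = v^i (i = 1,2) and S(u,w) := |uΛ^{e_j}w| otherwise. Then RS = A_{e_j}, SR = B_{e_j}, and A_{e_i}R = RB_{e_i}, B_{e_i}S = SA_{e_i} for all i = 1,…,k. -/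
import Mathlib


namespace KPaper

/-- A higher-rank graph (`k`-graph): a countable small category `Λ` (given by its set of
morphisms/paths, with source, range, partial composition) together with a degree functor
`deg : Λ → ℕ^k` satisfying the unique factorization property.  Objects are identified with
the degree-zero morphisms. -/
structure KGraph (k : ℕ) where
  Path : Type
  countable : Countable Path
  src : Path → Path
  rng : Path → Path
  deg : Path → (Fin k → ℕ)
  comp : Path → Path → Path
  deg_src : ∀ p, deg (src p) = 0
  deg_rng : ∀ p, deg (rng p) = 0
  src_vertex : ∀ p, deg p = 0 → src p = p
  rng_vertex : ∀ p, deg p = 0 → rng p = p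
  comp_assoc : ∀ p q r, src p = rng q → src q = rng r →
    comp (comp p q) r = comp p (comp q r)
  src_comp : ∀ p q, src p = rng q → src (comp p q) = src q
  rng_comp : ∀ p q, src p = rng q → rng (comp p q) = rng p
  deg_comp : ∀ p q, src p = rng q → deg (comp p q) = deg p + deg q
  comp_src : ∀ p, comp p (src p) = p
  rng_comp_self : ∀ p, comp (rng p) p = p
  factor : ∀ p m n, deg p = m + n →
    ∃! μν : Path × Path, deg μν.1 = m ∧ deg μν.2 = n ∧
      src μν.1 = rng μν.2 ∧ comp μν.1 μν.2 = p

namespace KGraph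

/-- The `i`-th standard generator of `ℕ^k`. -/
def e (k : ℕ) (i : Fin k) : Fin k → ℕ := Pi.single i 1

/-- The `i`-th standard generator of `ℤ^k`. -/
def eZ (k : ℕ) (i : Fin k) : Fin k → ℤ := Pi.single i 1

variable {k : ℕ} (Λ : KGraph k)

/-- The set of vertices `Λ⁰` of a `k`-graph: the degree-zero morphisms. -/
def Vertex : Type := {v : Λ.Path // Λ.deg v = 0}

def srcV (p : Λ.Path) : Λ.Vertex := ⟨Λ.src p, Λ.deg_src p⟩
def rngV (p : Λ.Path) : Λ.Vertex := ⟨Λ.rng p, Λ.deg_rng p⟩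

/-- `vΛⁿ`: the set of paths of degree `n` with range `v`. -/
def pathsTo (v : Λ.Path) (n : Fin k → ℕ) : Set Λ.Path := {p | Λ.rng p = v ∧ Λ.deg p = n}

/-- `Λ` is row-finite with no sources: `0 < |vΛⁿ| < ∞` for all vertices `v` and `n ∈ ℕ^k`. -/
def RowFiniteNoSources : Prop :=
  ∀ v : Λ.Path, Λ.deg v = 0 → ∀ n : Fin k → ℕ,
    (Λ.pathsTo v n).Finite ∧ (Λ.pathsTo v n).Nonempty

/-- Edges: morphisms of degree `e_i` for some `i`. -/
def IsEdge (p : Λ.Path) : Prop := ∃ i : Fin k, Λ.deg p = e k i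

/-- The vertex matrix `A_n ∈ M_{Λ⁰}(ℕ)`, with `A_n(u,v) = |uΛⁿv|`. -/
noncomputable def vertexMatrix (n : Fin k → ℕ) : Matrix Λ.Vertex Λ.Vertex ℕ :=
  Matrix.of fun u v =>
    Nat.card {p : Λ.Path // Λ.deg p = n ∧ Λ.rng p = u.1 ∧ Λ.src p = v.1}

end KGraph

end KPaper

namespace KPaper
namespace KGraph

variable {k : ℕ} (Λ : KGraph k)

/-- A partition `vΛ¹ = E₁ ∪ E₂` into two nonempty disjoint sets satisfying the pairing
condition. -/
def IsPairingPartition (v : Λ.Path) (E1 E2 : Set Λ.Path) : Prop :=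
  E1.Nonempty ∧ E2.Nonempty ∧ Disjoint E1 E2 ∧
  (E1 ∪ E2 = {p | Λ.IsEdge p ∧ Λ.rng p = v}) ∧
  (∀ p q α β, p ∈ E1 ∪ E2 → q ∈ E1 ∪ E2 → Λ.IsEdge α → Λ.IsEdge β →
    Λ.src p = Λ.rng α → Λ.src q = Λ.rng β → Λ.comp p α = Λ.comp q β →
    (p ∈ E1 ↔ q ∈ E1))

/-- The in-split `Λ_I` of a `k`-graph `Λ` at a vertex `v` with respect to a partition
`vΛ¹ = E₁ ∪ E₂`, presented by its characteristic properties: a `k`-graph `lamI` together with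
a degree-preserving, composition-preserving parent map `par : Λ_I → Λ` whose vertex fibres are
`{v¹, v²}` over `v` and singletons elsewhere, with the unique source-lifting property, and with
the ranges of lifted edges governed by the partition. -/
structure InSplitData (v : Λ.Path) (hv : Λ.deg v = 0) (E1 E2 : Set Λ.Path) where
  lamI : KGraph k
  par : lamI.Path → Λ.Path
  v1 : lamI.Path
  v2 : lamI.Path
  v1_vertex : lamI.deg v1 = 0
  v2_vertex : lamI.deg v2 = 0
  v1_ne_v2 : v1 ≠ v2
  par_v1 : par v1 = v
  par_v2 : par v2 = v
  par_deg : ∀ p, lamI.deg p = Λ.deg (par p)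
  par_src : ∀ p, par (lamI.src p) = Λ.src (par p)
  par_rng : ∀ p, par (lamI.rng p) = Λ.rng (par p)
  par_comp : ∀ p q, lamI.src p = lamI.rng q →
    par (lamI.comp p q) = Λ.comp (par p) (par q)
  par_surjective : Function.Surjective par
  vertex_fiber_v : ∀ w, lamI.deg w = 0 → par w = v → (w = v1 ∨ w = v2)
  vertex_fiber_inj : ∀ w w', lamI.deg w = 0 → lamI.deg w' = 0 →
    par w = par w' → par w ≠ v → w = w'
  lift_unique : ∀ (p : Λ.Path) (w : lamI.Path), lamI.deg w = 0 → par w = Λ.src p →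
    ∃! q : lamI.Path, par q = p ∧ lamI.src q = w
  rng_lift_E1 : ∀ q, Λ.IsEdge (par q) → Λ.rng (par q) = v →
    (lamI.rng q = v1 ↔ par q ∈ E1)
  rng_lift_E2 : ∀ q, Λ.IsEdge (par q) → Λ.rng (par q) = v →
    (lamI.rng q = v2 ↔ par q ∈ E2)
  rng_lift_of_ne : ∀ q, Λ.rng (par q) ≠ v → par (lamI.rng q) = Λ.rng (par q)
  fiber_finite : ∀ p : Λ.Path, {q : lamI.Path | par q = p}.Finite

end KGraph
end KPaper

namespace KPaper
open KGraph
open Classical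

variable {k : ℕ} (Λ : KGraph k) {v : Λ.Path} {hv : Λ.deg v = 0} {E1 E2 : Set Λ.Path}

/-- The matrix `R ∈ M_{Λ⁰×Λ_I⁰}(ℕ)`, `R(u,w) = 1` if `u = par(w)` and `0` otherwise. -/
noncomputable def insplitR (D : Λ.InSplitData v hv E1 E2) :
    Matrix Λ.Vertex D.lamI.Vertex ℕ :=
  Matrix.of fun u w => if u.1 = D.par w.1 then 1 else 0

/-- The matrix `S ∈ M_{Λ_I⁰×Λ⁰}(ℕ)`:
`S(v^i, w) = |Λ^{e_j} w ∩ E_i|` and `S(u, w) = |par(u) Λ^{e_j} w|` otherwise. -/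
noncomputable def insplitS (D : Λ.InSplitData v hv E1 E2) (j : Fin k) :
    Matrix D.lamI.Vertex Λ.Vertex ℕ :=
  Matrix.of fun u w =>
    if u.1 = D.v1 then
      Nat.card {p : Λ.Path // Λ.deg p = e k j ∧ Λ.src p = w.1 ∧ p ∈ E1}
    else if u.1 = D.v2 then
      Nat.card {p : Λ.Path // Λ.deg p = e k j ∧ Λ.src p = w.1 ∧ p ∈ E2}
    else
      Nat.card {p : Λ.Path // Λ.deg p = e k j ∧ Λ.src p = w.1 ∧ Λ.rng p = D.par u.1}


section CardAux
variable {α γ δ ι : Type}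

lemma nat_card_sigma [Fintype ι] (f : ι → Type) [∀ i, Finite (f i)] :
    Nat.card (Σ i, f i) = ∑ i, Nat.card (f i) := by
  letI : ∀ i, Fintype (f i) := fun i => Fintype.ofFinite _
  simp [Nat.card_eq_fintype_card, Fintype.card_sigma]

lemma card_reorder {P Q : α → Prop} (h : ∀ a, P a ↔ Q a) :
    Nat.card {a // P a} = Nat.card {a // Q a} :=
  Nat.card_congr (Equiv.subtypeEquivRight h)

lemma card_or {P Q : α → Prop} (hPQ : ∀ a, ¬(P a ∧ Q a))
    (hP : Finite {a // P a}) (hQ : Finite {a // Q a}) :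
    Nat.card {a // P a ∨ Q a} = Nat.card {a // P a} + Nat.card {a // Q a} := by
  classical
  haveI := hP; haveI := hQ
  rw [← Nat.card_sum]
  exact Nat.card_congr (subtypeOrEquiv P Q
    (Pi.disjoint_iff.mpr fun a => Prop.disjoint_iff.mpr (hPQ a)))

lemma card_eq_sum_fibers [Fintype ι] (f : α → ι) [Finite α] :
    Nat.card α = ∑ i, Nat.card {a // f a = i} := by
  rw [← nat_card_sigma]
  exact Nat.card_congr (Equiv.sigmaFiberEquiv f).symm

lemma card_fiber_prod (Q : γ → Prop) (P : ι → δ → Prop) (g : γ → ι) (x : ι) :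
    Nat.card {a : {qp : γ × δ // Q qp.1 ∧ P (g qp.1) qp.2} // g a.1.1 = x}
      = Nat.card {q : γ // Q q ∧ g q = x} * Nat.card {p : δ // P x p} := by
  rw [← Nat.card_prod]
  apply Nat.card_congr
  refine ⟨fun a => (⟨a.1.1.1, a.1.2.1, a.2⟩, ⟨a.1.1.2, ?_⟩),
          fun qp => ⟨⟨(qp.1.1, qp.2.1), qp.1.2.1, ?_⟩, qp.1.2.2⟩,
          fun a => Subtype.ext (Subtype.ext rfl),
          fun qp => Prod.ext (Subtype.ext rfl) (Subtype.ext rfl)⟩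
  · obtain ⟨⟨⟨q,p⟩, hq, hp⟩, hx⟩ := a
    exact hx ▸ hp
  · obtain ⟨⟨q, hq, hx⟩, ⟨p, hp⟩⟩ := qp
    exact hx ▸ hp

lemma card_pairs [Fintype ι] (Q : γ → Prop) (P : ι → δ → Prop) (g : γ → ι)
    (hfin : Finite {qp : γ × δ // Q qp.1 ∧ P (g qp.1) qp.2}) :
    Nat.card {qp : γ × δ // Q qp.1 ∧ P (g qp.1) qp.2}
      = ∑ x : ι, Nat.card {q : γ // Q q ∧ g q = x} * Nat.card {p : δ // P x p} := by
  haveI := hfin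
  rw [card_eq_sum_fibers (fun a : {qp : γ × δ // Q qp.1 ∧ P (g qp.1) qp.2} => g a.1.1)]
  exact Finset.sum_congr rfl fun x _ => card_fiber_prod Q P g x

end CardAux

section AuxK
variable {Λ}

lemma fin_pred (hΛ : Λ.RowFiniteNoSources) (n : Fin k → ℕ) {u : Λ.Path} (hu : Λ.deg u = 0)
    (P : Λ.Path → Prop) (hP : ∀ p, P p → Λ.deg p = n ∧ Λ.rng p = u) :
    Finite {p : Λ.Path // P p} :=
  ((hΛ u hu n).1.subset fun p hp => ⟨(hP p hp).2, (hP p hp).1⟩).to_subtype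

lemma fin_deg (hΛ : Λ.RowFiniteNoSources) [Fintype Λ.Vertex] (n : Fin k → ℕ)
    (P : Λ.Path → Prop) (hP : ∀ p, P p → Λ.deg p = n) :
    Finite {p : Λ.Path // P p} := by
  have hsub : {p : Λ.Path | P p} ⊆ ⋃ w : Λ.Vertex, Λ.pathsTo w.1 n := fun p hp =>
    Set.mem_iUnion.2 ⟨Λ.rngV p, rfl, hP p hp⟩
  exact ((Set.finite_iUnion fun w : Λ.Vertex => (hΛ w.1 w.2 n).1).subset hsub).to_subtype

lemma parsrc_inj (D : Λ.InSplitData v hv E1 E2) {q1 q2 : D.lamI.Path}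
    (h1 : D.par q1 = D.par q2) (h2 : D.lamI.src q1 = D.lamI.src q2) : q1 = q2 :=
  (D.lift_unique (D.par q1) (D.lamI.src q1) (D.lamI.deg_src q1)
    (D.par_src q1)).unique ⟨rfl, rfl⟩ ⟨h1.symm, h2.symm⟩

lemma fin_degI (hΛ : Λ.RowFiniteNoSources) [Fintype Λ.Vertex]
    (D : Λ.InSplitData v hv E1 E2) [Fintype D.lamI.Vertex] (n : Fin k → ℕ)
    (P : D.lamI.Path → Prop) (hP : ∀ q, P q → D.lamI.deg q = n) :
    Finite {q : D.lamI.Path // P q} := by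
  haveI : Finite {p : Λ.Path // Λ.deg p = n} := fin_deg hΛ n _ fun _ h => h
  apply Finite.of_injective (β := {p : Λ.Path // Λ.deg p = n} × D.lamI.Vertex)
    (fun q => (⟨D.par q.1, by rw [← D.par_deg]; exact hP q.1 q.2⟩, D.lamI.srcV q.1))
  intro a b h
  exact Subtype.ext (parsrc_inj D (congrArg (fun z => z.1.1) h) (congrArg (fun z => z.2.1) h))

def vx1 (D : Λ.InSplitData v hv E1 E2) : D.lamI.Vertex := ⟨D.v1, D.v1_vertex⟩
def vx2 (D : Λ.InSplitData v hv E1 E2) : D.lamI.Vertex := ⟨D.v2, D.v2_vertex⟩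

lemma vx1_ne_vx2 (D : Λ.InSplitData v hv E1 E2) : vx1 D ≠ vx2 D :=
  fun h => D.v1_ne_v2 (congrArg Subtype.val h)

noncomputable def liftV (D : Λ.InSplitData v hv E1 E2) (u : Λ.Vertex) : D.lamI.Vertex :=
  ⟨(D.par_surjective u.1).choose, by
    rw [D.par_deg, (D.par_surjective u.1).choose_spec]; exact u.2⟩

lemma par_liftV (D : Λ.InSplitData v hv E1 E2) (u : Λ.Vertex) :
    D.par (liftV D u).1 = u.1 := (D.par_surjective u.1).choose_spec

def parV (D : Λ.InSplitData v hv E1 E2) (w : D.lamI.Vertex) : Λ.Vertex :=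
  ⟨D.par w.1, by rw [← D.par_deg]; exact w.2⟩

lemma sum_fiber_ne (D : Λ.InSplitData v hv E1 E2) [Fintype D.lamI.Vertex]
    {u : Λ.Vertex} (hu : u.1 ≠ v) (f : D.lamI.Vertex → ℕ) :
    (∑ x : D.lamI.Vertex, (if u.1 = D.par x.1 then 1 else 0) * f x) = f (liftV D u) := by
  have key : ∀ x : D.lamI.Vertex, (u.1 = D.par x.1) ↔ x = liftV D u := by
    intro x
    constructor
    · intro h
      refine Subtype.ext (D.vertex_fiber_inj x.1 (liftV D u).1 x.2 (liftV D u).2 ?_ ?_)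
      · rw [← h, par_liftV]
      · rw [← h]; exact hu
    · rintro rfl
      exact (par_liftV D u).symm
  simp_rw [key, ite_mul, one_mul, zero_mul]
  simp

lemma sum_fiber_v (D : Λ.InSplitData v hv E1 E2) [Fintype D.lamI.Vertex]
    {u : Λ.Vertex} (hu : u.1 = v) (f : D.lamI.Vertex → ℕ) :
    (∑ x : D.lamI.Vertex, (if u.1 = D.par x.1 then 1 else 0) * f x)
      = f (vx1 D) + f (vx2 D) := by
  have key : ∀ x : D.lamI.Vertex, (u.1 = D.par x.1) ↔ (x = vx1 D ∨ x = vx2 D) := by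
    intro x
    constructor
    · intro h
      rcases D.vertex_fiber_v x.1 x.2 (h.symm.trans hu) with h' | h'
      · exact Or.inl (Subtype.ext h')
      · exact Or.inr (Subtype.ext h')
    · rintro (rfl | rfl)
      · rw [hu]; exact D.par_v1.symm
      · rw [hu]; exact D.par_v2.symm
  simp_rw [key, ite_mul, one_mul, zero_mul]
  rw [← Finset.sum_filter]
  have hfe : (Finset.univ.filter fun x : D.lamI.Vertex => x = vx1 D ∨ x = vx2 D)
      = {vx1 D, vx2 D} := by
    ext x
    simp [Finset.mem_filter, Finset.mem_insert, Finset.mem_singleton]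
  rw [hfe, Finset.sum_insert (by simp only [Finset.mem_singleton]; exact vx1_ne_vx2 D),
    Finset.sum_singleton]

lemma sum_parV (D : Λ.InSplitData v hv E1 E2) [Fintype Λ.Vertex]
    (w : D.lamI.Vertex) (g : Λ.Vertex → ℕ) :
    (∑ u : Λ.Vertex, g u * (if u.1 = D.par w.1 then 1 else 0)) = g (parV D w) := by
  have key : ∀ u : Λ.Vertex, (u.1 = D.par w.1) ↔ u = parV D w := fun u =>
    ⟨fun h => Subtype.ext h, fun h => congrArg Subtype.val h⟩
  simp_rw [key, mul_ite, mul_one, mul_zero]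
  simp

lemma mem_union_of (hpart : Λ.IsPairingPartition v E1 E2) {p : Λ.Path}
    (he : Λ.IsEdge p) (hr : Λ.rng p = v) : p ∈ E1 ∪ E2 := by
  rw [hpart.2.2.2.1]; exact ⟨he, hr⟩

lemma rng_of_mem (hpart : Λ.IsPairingPartition v E1 E2) {p : Λ.Path}
    (hp : p ∈ E1 ∪ E2) : Λ.rng p = v := by
  have h := hpart.2.2.2.1
  rw [Set.ext_iff] at h
  exact ((h p).mp hp).2

lemma pairing_iff (hpart : Λ.IsPairingPartition v E1 E2) {μ ν p' α : Λ.Path}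
    (hμ : μ ∈ E1 ∪ E2) (hp' : p' ∈ E1 ∪ E2) (hν : Λ.IsEdge ν) (hα : Λ.IsEdge α)
    (h1 : Λ.src μ = Λ.rng ν) (h2 : Λ.src p' = Λ.rng α)
    (h3 : Λ.comp μ ν = Λ.comp p' α) :
    (μ ∈ E1 ↔ p' ∈ E1) ∧ (μ ∈ E2 ↔ p' ∈ E2) := by
  have hE1 := hpart.2.2.2.2 μ p' ν α hμ hp' hν hα h1 h2 h3
  have hdisj := hpart.2.2.1
  refine ⟨hE1, ?_, ?_⟩
  · intro h
    have hn1 : μ ∉ E1 := fun h' => (Set.disjoint_left.mp hdisj h') h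
    exact ((Set.mem_union _ _ _).1 hp').resolve_left fun h' => hn1 (hE1.mpr h')
  · intro h
    have hn1 : p' ∉ E1 := fun h' => (Set.disjoint_left.mp hdisj h') h
    exact ((Set.mem_union _ _ _).1 hμ).resolve_left fun h' => hn1 (hE1.mp h')

def Scond (D : Λ.InSplitData v hv E1 E2) (w : D.lamI.Path) (p : Λ.Path) : Prop :=
  if w = D.v1 then p ∈ E1 else if w = D.v2 then p ∈ E2 else Λ.rng p = D.par w

lemma scond_v1 (D : Λ.InSplitData v hv E1 E2) (p : Λ.Path) :
    Scond D D.v1 p ↔ p ∈ E1 := by simp [Scond]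

lemma scond_v2 (D : Λ.InSplitData v hv E1 E2) (p : Λ.Path) :
    Scond D D.v2 p ↔ p ∈ E2 := by simp [Scond, D.v1_ne_v2.symm]

lemma scond_other (D : Λ.InSplitData v hv E1 E2) {w : D.lamI.Path}
    (h1 : w ≠ D.v1) (h2 : w ≠ D.v2) (p : Λ.Path) :
    Scond D w p ↔ Λ.rng p = D.par w := by simp [Scond, h1, h2]

lemma rng_of_scond (hpart : Λ.IsPairingPartition v E1 E2) (D : Λ.InSplitData v hv E1 E2)
    {w : D.lamI.Path} {p : Λ.Path} (hsc : Scond D w p) : Λ.rng p = D.par w := by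
  unfold Scond at hsc
  split_ifs at hsc with h1 h2
  · rw [h1, D.par_v1]; exact rng_of_mem hpart (Set.mem_union_left _ hsc)
  · rw [h2, D.par_v2]; exact rng_of_mem hpart (Set.mem_union_right _ hsc)
  · exact hsc

lemma insplitS_vx1 (D : Λ.InSplitData v hv E1 E2) (j : Fin k) (u : Λ.Vertex) :
    insplitS Λ D j (vx1 D) u
      = Nat.card {p : Λ.Path // Λ.deg p = e k j ∧ p ∈ E1 ∧ Λ.src p = u.1} := by
  show (if (vx1 D).1 = D.v1 then _ else _) = _
  rw [if_pos (show (vx1 D).1 = D.v1 from rfl)]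
  exact card_reorder fun p => by tauto

lemma insplitS_vx2 (D : Λ.InSplitData v hv E1 E2) (j : Fin k) (u : Λ.Vertex) :
    insplitS Λ D j (vx2 D) u
      = Nat.card {p : Λ.Path // Λ.deg p = e k j ∧ p ∈ E2 ∧ Λ.src p = u.1} := by
  show (if (vx2 D).1 = D.v1 then _ else if (vx2 D).1 = D.v2 then _ else _) = _
  rw [if_neg (show (vx2 D).1 ≠ D.v1 from D.v1_ne_v2.symm),
    if_pos (show (vx2 D).1 = D.v2 from rfl)]
  exact card_reorder fun p => by tauto

lemma insplitS_ne (D : Λ.InSplitData v hv E1 E2) (j : Fin k) {x : D.lamI.Vertex}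
    (h1 : x.1 ≠ D.v1) (h2 : x.1 ≠ D.v2) (u : Λ.Vertex) :
    insplitS Λ D j x u
      = Nat.card {p : Λ.Path // Λ.deg p = e k j ∧ Λ.rng p = D.par x.1 ∧ Λ.src p = u.1} := by
  show (if x.1 = D.v1 then _ else if x.1 = D.v2 then _ else _) = _
  rw [if_neg h1, if_neg h2]
  exact card_reorder fun p => by tauto

lemma insplitS_eq (D : Λ.InSplitData v hv E1 E2) (j : Fin k) (x : D.lamI.Vertex)
    (u : Λ.Vertex) :
    insplitS Λ D j x u
      = Nat.card {p : Λ.Path // Λ.deg p = e k j ∧ Scond D x.1 p ∧ Λ.src p = u.1} := by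
  by_cases h1 : x.1 = D.v1
  · rw [show x = vx1 D from Subtype.ext h1, insplitS_vx1]
    exact card_reorder fun p =>
      ⟨fun h => ⟨h.1, (scond_v1 D p).mpr h.2.1, h.2.2⟩,
       fun h => ⟨h.1, (scond_v1 D p).mp h.2.1, h.2.2⟩⟩
  · by_cases h2 : x.1 = D.v2
    · rw [show x = vx2 D from Subtype.ext h2, insplitS_vx2]
      exact card_reorder fun p =>
        ⟨fun h => ⟨h.1, (scond_v2 D p).mpr h.2.1, h.2.2⟩,
         fun h => ⟨h.1, (scond_v2 D p).mp h.2.1, h.2.2⟩⟩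
    · rw [insplitS_ne D j h1 h2 u]
      exact card_reorder fun p =>
        ⟨fun h => ⟨h.1, (scond_other D h1 h2 p).mpr h.2.1, h.2.2⟩,
         fun h => ⟨h.1, (scond_other D h1 h2 p).mp h.2.1, h.2.2⟩⟩

lemma card_lift (D : Λ.InSplitData v hv E1 E2) {w : D.lamI.Path}
    (hw : D.lamI.deg w = 0) (n : Fin k → ℕ)
    (CI : D.lamI.Path → Prop) (C : Λ.Path → Prop)
    (hC : ∀ q, D.lamI.deg q = n → D.lamI.src q = w → (CI q ↔ C (D.par q))) :
    Nat.card {q : D.lamI.Path // D.lamI.deg q = n ∧ CI q ∧ D.lamI.src q = w}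
      = Nat.card {p : Λ.Path // Λ.deg p = n ∧ C p ∧ Λ.src p = D.par w} := by
  apply Nat.card_congr
  refine Equiv.ofBijective (fun q => ⟨D.par q.1,
    by rw [← D.par_deg]; exact q.2.1,
    (hC q.1 q.2.1 q.2.2.2).mp q.2.2.1,
    by rw [← D.par_src, q.2.2.2]⟩) ⟨?_, ?_⟩
  · intro q1 q2 h
    exact Subtype.ext (parsrc_inj D (congrArg Subtype.val h)
      (q1.2.2.2.trans q2.2.2.2.symm))
  · rintro ⟨p, hd, hCp, hs⟩
    obtain ⟨q, ⟨hpq, hsq⟩, -⟩ := D.lift_unique p w hw hs.symm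
    refine ⟨⟨q, ?_, ?_, hsq⟩, Subtype.ext hpq⟩
    · rw [D.par_deg, hpq, hd]
    · exact (hC q (by rw [D.par_deg, hpq, hd]) hsq).mpr (by rw [hpq]; exact hCp)

lemma edge_par (D : Λ.InSplitData v hv E1 E2) {q : D.lamI.Path} {i : Fin k}
    (h : D.lamI.deg q = e k i) : Λ.IsEdge (D.par q) :=
  ⟨i, by rw [← D.par_deg]; exact h⟩

lemma rng_iff_E1 (hpart : Λ.IsPairingPartition v E1 E2) (D : Λ.InSplitData v hv E1 E2)
    {q : D.lamI.Path} (hedge : Λ.IsEdge (D.par q)) :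
    D.lamI.rng q = D.v1 ↔ D.par q ∈ E1 := by
  constructor
  · intro h
    exact (D.rng_lift_E1 q hedge (by rw [← D.par_rng, h, D.par_v1])).mp h
  · intro h
    exact (D.rng_lift_E1 q hedge (rng_of_mem hpart (Set.mem_union_left _ h))).mpr h

lemma rng_iff_E2 (hpart : Λ.IsPairingPartition v E1 E2) (D : Λ.InSplitData v hv E1 E2)
    {q : D.lamI.Path} (hedge : Λ.IsEdge (D.par q)) :
    D.lamI.rng q = D.v2 ↔ D.par q ∈ E2 := by
  constructor
  · intro h
    exact (D.rng_lift_E2 q hedge (by rw [← D.par_rng, h, D.par_v2])).mp h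
  · intro h
    exact (D.rng_lift_E2 q hedge (rng_of_mem hpart (Set.mem_union_right _ h))).mpr h

lemma rng_lift_eq (D : Λ.InSplitData v hv E1 E2) {q y : D.lamI.Path}
    (hy : D.lamI.deg y = 0) (hedge : Λ.IsEdge (D.par q)) (hr : Λ.rng (D.par q) = D.par y)
    (h1 : y = D.v1 → D.par q ∈ E1) (h2 : y = D.v2 → D.par q ∈ E2) :
    D.lamI.rng q = y := by
  by_cases hyv : D.par y = v
  · rcases D.vertex_fiber_v y hy hyv with h | h
    · rw [h]; exact (D.rng_lift_E1 q hedge (hr.trans hyv)).mpr (h1 h)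
    · rw [h]; exact (D.rng_lift_E2 q hedge (hr.trans hyv)).mpr (h2 h)
  · exact D.vertex_fiber_inj _ _ (D.lamI.deg_rng q) hy (by rw [D.par_rng, hr])
      (by rw [D.par_rng, hr]; exact hyv)

lemma rng_iff_ne (D : Λ.InSplitData v hv E1 E2) {q y : D.lamI.Path}
    (hy : D.lamI.deg y = 0) (hy1 : y ≠ D.v1) (hy2 : y ≠ D.v2)
    (hedge : Λ.IsEdge (D.par q)) :
    D.lamI.rng q = y ↔ Λ.rng (D.par q) = D.par y := by
  constructor
  · intro h; rw [← D.par_rng, h]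
  · intro h; exact rng_lift_eq D hy hedge h (fun hh => absurd hh hy1) (fun hh => absurd hh hy2)

lemma rng_iff_scond (hpart : Λ.IsPairingPartition v E1 E2) (D : Λ.InSplitData v hv E1 E2)
    {q : D.lamI.Path} (x : D.lamI.Vertex) (hedge : Λ.IsEdge (D.par q)) :
    D.lamI.rng q = x.1 ↔ Scond D x.1 (D.par q) := by
  by_cases h1 : x.1 = D.v1
  · rw [h1]
    exact (rng_iff_E1 hpart D hedge).trans (scond_v1 D _).symm
  · by_cases h2 : x.1 = D.v2
    · rw [h2]
      exact (rng_iff_E2 hpart D hedge).trans (scond_v2 D _).symm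
    · rw [scond_other D h1 h2]
      exact rng_iff_ne D x.2 h1 h2 hedge

noncomputable def w0 (D : Λ.InSplitData v hv E1 E2) (p : Λ.Path) : D.lamI.Path :=
  if p ∈ E1 then D.v1 else if p ∈ E2 then D.v2 else (liftV D (Λ.rngV p)).1

lemma w0_deg (D : Λ.InSplitData v hv E1 E2) (p : Λ.Path) : D.lamI.deg (w0 D p) = 0 := by
  unfold w0; split_ifs
  · exact D.v1_vertex
  · exact D.v2_vertex
  · exact (liftV D (Λ.rngV p)).2

lemma par_w0 (hpart : Λ.IsPairingPartition v E1 E2) (D : Λ.InSplitData v hv E1 E2)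
    (p : Λ.Path) : D.par (w0 D p) = Λ.rng p := by
  unfold w0; split_ifs with h1 h2
  · rw [D.par_v1]; exact (rng_of_mem hpart (Set.mem_union_left _ h1)).symm
  · rw [D.par_v2]; exact (rng_of_mem hpart (Set.mem_union_right _ h2)).symm
  · exact par_liftV D (Λ.rngV p)

lemma scond_w0 (hpart : Λ.IsPairingPartition v E1 E2) (D : Λ.InSplitData v hv E1 E2)
    {p : Λ.Path} {j : Fin k} (hp : Λ.deg p = e k j) : Scond D (w0 D p) p := by
  by_cases h1 : p ∈ E1
  · have hw : w0 D p = D.v1 := by unfold w0; rw [if_pos h1]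
    rw [hw]; exact (scond_v1 D p).mpr h1
  · by_cases h2 : p ∈ E2
    · have hw : w0 D p = D.v2 := by unfold w0; rw [if_neg h1, if_pos h2]
      rw [hw]; exact (scond_v2 D p).mpr h2
    · have hrv : Λ.rng p ≠ v := fun h => by
        rcases (Set.mem_union _ _ _).1 (mem_union_of hpart ⟨j, hp⟩ h) with h' | h'
        exacts [h1 h', h2 h']
      have hne1 : w0 D p ≠ D.v1 := fun h => hrv (by rw [← par_w0 hpart D p, h, D.par_v1])
      have hne2 : w0 D p ≠ D.v2 := fun h => hrv (by rw [← par_w0 hpart D p, h, D.par_v2])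
      rw [scond_other D hne1 hne2 p]
      exact (par_w0 hpart D p).symm

lemma src_eq_w0 (hpart : Λ.IsPairingPartition v E1 E2) (D : Λ.InSplitData v hv E1 E2)
    {wq : D.lamI.Path} {p : Λ.Path} {j : Fin k}
    (hwq : D.lamI.deg wq = 0) (hp : Λ.deg p = e k j) (hsc : Scond D wq p) :
    wq = w0 D p := by
  by_cases hw1 : wq = D.v1
  · have hp1 : p ∈ E1 := (scond_v1 D p).mp (hw1 ▸ hsc)
    rw [hw1]; unfold w0; rw [if_pos hp1]
  · by_cases hw2 : wq = D.v2
    · have hp2 : p ∈ E2 := (scond_v2 D p).mp (hw2 ▸ hsc)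
      have hp1 : p ∉ E1 := fun h => (Set.disjoint_left.mp hpart.2.2.1 h) hp2
      rw [hw2]; unfold w0; rw [if_neg hp1, if_pos hp2]
    · have hr : Λ.rng p = D.par wq := (scond_other D hw1 hw2 p).mp hsc
      have hpv : D.par wq ≠ v := fun h => by
        rcases D.vertex_fiber_v wq hwq h with h' | h'
        exacts [hw1 h', hw2 h']
      have hp1 : p ∉ E1 := fun h =>
        hpv (hr.symm.trans (rng_of_mem hpart (Set.mem_union_left _ h)))
      have hp2 : p ∉ E2 := fun h =>
        hpv (hr.symm.trans (rng_of_mem hpart (Set.mem_union_right _ h)))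
      unfold w0; rw [if_neg hp1, if_neg hp2]
      exact D.vertex_fiber_inj wq _ hwq (liftV D (Λ.rngV p)).2
        (by rw [par_liftV D (Λ.rngV p)]; exact hr.symm) hpv

lemma card_split (hΛ : Λ.RowFiniteNoSources) (hpart : Λ.IsPairingPartition v E1 E2)
    (hv0 : Λ.deg v = 0) (i : Fin k) (u : Λ.Path) :
    Nat.card {p : Λ.Path // Λ.deg p = e k i ∧ Λ.rng p = v ∧ Λ.src p = u}
      = Nat.card {p : Λ.Path // Λ.deg p = e k i ∧ p ∈ E1 ∧ Λ.src p = u}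
        + Nat.card {p : Λ.Path // Λ.deg p = e k i ∧ p ∈ E2 ∧ Λ.src p = u} := by
  have hiff : ∀ p : Λ.Path, (Λ.deg p = e k i ∧ Λ.rng p = v ∧ Λ.src p = u) ↔
      ((Λ.deg p = e k i ∧ p ∈ E1 ∧ Λ.src p = u) ∨
        (Λ.deg p = e k i ∧ p ∈ E2 ∧ Λ.src p = u)) := by
    intro p
    constructor
    · rintro ⟨hd, hr, hs⟩
      rcases (Set.mem_union _ _ _).1 (mem_union_of hpart ⟨i, hd⟩ hr) with h | h
      · exact Or.inl ⟨hd, h, hs⟩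
      · exact Or.inr ⟨hd, h, hs⟩
    · rintro (⟨hd, h, hs⟩ | ⟨hd, h, hs⟩)
      · exact ⟨hd, rng_of_mem hpart (Set.mem_union_left _ h), hs⟩
      · exact ⟨hd, rng_of_mem hpart (Set.mem_union_right _ h), hs⟩
  rw [card_reorder hiff]
  exact card_or (fun p h => Set.disjoint_left.mp hpart.2.2.1 h.1.2.1 h.2.2.1)
    (fin_pred hΛ (e k i) hv0 _ fun p hp =>
      ⟨hp.1, rng_of_mem hpart (Set.mem_union_left _ hp.2.1)⟩)
    (fin_pred hΛ (e k i) hv0 _ fun p hp =>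
      ⟨hp.1, rng_of_mem hpart (Set.mem_union_right _ hp.2.1)⟩)

noncomputable def fac (p : Λ.Path) (m n : Fin k → ℕ) (h : Λ.deg p = m + n) :
    Λ.Path × Λ.Path :=
  (Λ.factor p m n h).exists.choose

lemma fac_spec (p : Λ.Path) (m n : Fin k → ℕ) (h : Λ.deg p = m + n) :
    Λ.deg (fac p m n h).1 = m ∧ Λ.deg (fac p m n h).2 = n ∧
      Λ.src (fac p m n h).1 = Λ.rng (fac p m n h).2 ∧
      Λ.comp (fac p m n h).1 (fac p m n h).2 = p :=
  (Λ.factor p m n h).exists.choose_spec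

lemma fac_unique {p : Λ.Path} {m n : Fin k → ℕ} (h : Λ.deg p = m + n) {μ ν : Λ.Path}
    (h1 : Λ.deg μ = m) (h2 : Λ.deg ν = n) (h3 : Λ.src μ = Λ.rng ν)
    (h4 : Λ.comp μ ν = p) : (μ, ν) = fac p m n h :=
  (Λ.factor p m n h).unique ⟨h1, h2, h3, h4⟩ (fac_spec p m n h)

noncomputable def lift (D : Λ.InSplitData v hv E1 E2) (p : Λ.Path) (w : D.lamI.Path)
    (hw : D.lamI.deg w = 0) (hpw : D.par w = Λ.src p) : D.lamI.Path :=
  (D.lift_unique p w hw hpw).exists.choose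

lemma lift_spec (D : Λ.InSplitData v hv E1 E2) (p : Λ.Path) (w : D.lamI.Path)
    (hw : D.lamI.deg w = 0) (hpw : D.par w = Λ.src p) :
    D.par (lift D p w hw hpw) = p ∧ D.lamI.src (lift D p w hw hpw) = w :=
  (D.lift_unique p w hw hpw).exists.choose_spec

lemma cardP1P2 (hpart : Λ.IsPairingPartition v E1 E2) (D : Λ.InSplitData v hv E1 E2)
    (i j : Fin k) (x : D.lamI.Vertex) (u : Λ.Vertex) :
    Nat.card {qp : D.lamI.Path × Λ.Path //
        (D.lamI.deg qp.1 = e k i ∧ D.lamI.rng qp.1 = x.1) ∧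
        (Λ.deg qp.2 = e k j ∧ Scond D (D.lamI.src qp.1) qp.2 ∧ Λ.src qp.2 = u.1)}
      = Nat.card {pa : Λ.Path × Λ.Path //
        (Λ.deg pa.1 = e k j ∧ Scond D x.1 pa.1) ∧
        (Λ.deg pa.2 = e k i ∧ Λ.rng pa.2 = Λ.src pa.1 ∧ Λ.src pa.2 = u.1)} := by
  apply Nat.card_congr
  have hrp : ∀ (q : D.lamI.Path) (p : Λ.Path), Scond D (D.lamI.src q) p →
      Λ.rng p = Λ.src (D.par q) := fun q p hsc =>
    (rng_of_scond hpart D hsc).trans (D.par_src q)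
  have hdeg : ∀ (q : D.lamI.Path) (p : Λ.Path), D.lamI.deg q = e k i → Λ.deg p = e k j →
      Scond D (D.lamI.src q) p → Λ.deg (Λ.comp (D.par q) p) = e k j + e k i := by
    intro q p hq hp hsc
    rw [Λ.deg_comp _ _ (hrp q p hsc).symm, ← D.par_deg, hq, hp, add_comm]
  have key : ∀ (q : D.lamI.Path) (p : Λ.Path) (hq : D.lamI.deg q = e k i)
      (hrq : D.lamI.rng q = x.1) (hp : Λ.deg p = e k j)
      (hsc : Scond D (D.lamI.src q) p) (hsu : Λ.src p = u.1),
      (Λ.deg (fac (Λ.comp (D.par q) p) (e k j) (e k i) (hdeg q p hq hp hsc)).1 = e k j ∧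
        Scond D x.1 (fac (Λ.comp (D.par q) p) (e k j) (e k i) (hdeg q p hq hp hsc)).1) ∧
      (Λ.deg (fac (Λ.comp (D.par q) p) (e k j) (e k i) (hdeg q p hq hp hsc)).2 = e k i ∧
        Λ.rng (fac (Λ.comp (D.par q) p) (e k j) (e k i) (hdeg q p hq hp hsc)).2
          = Λ.src (fac (Λ.comp (D.par q) p) (e k j) (e k i) (hdeg q p hq hp hsc)).1 ∧
        Λ.src (fac (Λ.comp (D.par q) p) (e k j) (e k i) (hdeg q p hq hp hsc)).2 = u.1) := by
    intro q p hq hrq hp hsc hsu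
    obtain ⟨hd1, hd2, hsr, hcomp⟩ :=
      fac_spec (Λ.comp (D.par q) p) (e k j) (e k i) (hdeg q p hq hp hsc)
    set p' := (fac (Λ.comp (D.par q) p) (e k j) (e k i) (hdeg q p hq hp hsc)).1 with hp'def
    set α := (fac (Λ.comp (D.par q) p) (e k j) (e k i) (hdeg q p hq hp hsc)).2 with hαdef
    have hrlam : Λ.rng (Λ.comp (D.par q) p) = D.par x.1 := by
      rw [Λ.rng_comp _ _ (hrp q p hsc).symm, ← D.par_rng, hrq]
    have hrp' : Λ.rng p' = D.par x.1 := by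
      rw [← hcomp, Λ.rng_comp p' α hsr] at hrlam; exact hrlam
    have hsα : Λ.src α = u.1 := by
      have h1 : Λ.src (Λ.comp p' α) = Λ.src α := Λ.src_comp p' α hsr
      rw [hcomp, Λ.src_comp _ _ (hrp q p hsc).symm, hsu] at h1
      exact h1.symm
    refine ⟨⟨hd1, ?_⟩, hd2, hsr.symm, hsα⟩
    by_cases hx1 : x.1 = D.v1
    · have hqE1 : D.par q ∈ E1 := (rng_iff_E1 hpart D (edge_par D hq)).mp (hrq.trans hx1)
      have hrpv : Λ.rng p' = v := by rw [hrp', hx1, D.par_v1]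
      have hp'mem : p' ∈ E1 ∪ E2 := mem_union_of hpart ⟨j, hd1⟩ hrpv
      have hpair := pairing_iff hpart (Set.mem_union_left _ hqE1) hp'mem ⟨j, hp⟩
        ⟨i, hd2⟩ (hrp q p hsc).symm hsr hcomp.symm
      rw [hx1]
      exact (scond_v1 D p').mpr (hpair.1.mp hqE1)
    · by_cases hx2 : x.1 = D.v2
      · have hqE2 : D.par q ∈ E2 := (rng_iff_E2 hpart D (edge_par D hq)).mp (hrq.trans hx2)
        have hrpv : Λ.rng p' = v := by rw [hrp', hx2, D.par_v2]
        have hp'mem : p' ∈ E1 ∪ E2 := mem_union_of hpart ⟨j, hd1⟩ hrpv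
        have hpair := pairing_iff hpart (Set.mem_union_right _ hqE2) hp'mem ⟨j, hp⟩
          ⟨i, hd2⟩ (hrp q p hsc).symm hsr hcomp.symm
        rw [hx2]
        exact (scond_v2 D p').mpr (hpair.2.mp hqE2)
      · rw [scond_other D hx1 hx2]
        exact hrp'
  refine Equiv.ofBijective (fun a => ⟨fac (Λ.comp (D.par a.1.1) a.1.2) (e k j) (e k i)
      (hdeg a.1.1 a.1.2 a.2.1.1 a.2.2.1 a.2.2.2.1),
      key a.1.1 a.1.2 a.2.1.1 a.2.1.2 a.2.2.1 a.2.2.2.1 a.2.2.2.2⟩) ⟨?_, ?_⟩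
  · intro a b hab
    have hlam : Λ.comp (D.par a.1.1) a.1.2 = Λ.comp (D.par b.1.1) b.1.2 := by
      have sa := (fac_spec (Λ.comp (D.par a.1.1) a.1.2) (e k j) (e k i)
        (hdeg a.1.1 a.1.2 a.2.1.1 a.2.2.1 a.2.2.2.1)).2.2.2
      have sb := (fac_spec (Λ.comp (D.par b.1.1) b.1.2) (e k j) (e k i)
        (hdeg b.1.1 b.1.2 b.2.1.1 b.2.2.1 b.2.2.2.1)).2.2.2
      have h1 : fac (Λ.comp (D.par a.1.1) a.1.2) (e k j) (e k i)
          (hdeg a.1.1 a.1.2 a.2.1.1 a.2.2.1 a.2.2.2.1)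
          = fac (Λ.comp (D.par b.1.1) b.1.2) (e k j) (e k i)
          (hdeg b.1.1 b.1.2 b.2.1.1 b.2.2.1 b.2.2.2.1) := congrArg Subtype.val hab
      rw [← sa, ← sb, h1]
    have hda : Λ.deg (Λ.comp (D.par a.1.1) a.1.2) = e k i + e k j := by
      rw [Λ.deg_comp _ _ (hrp a.1.1 a.1.2 a.2.2.2.1).symm, ← D.par_deg, a.2.1.1, a.2.2.1]
    have ha := fac_unique hda (by rw [← D.par_deg]; exact a.2.1.1) a.2.2.1
      (hrp a.1.1 a.1.2 a.2.2.2.1).symm rfl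
    have hb := fac_unique hda (by rw [← D.par_deg]; exact b.2.1.1) b.2.2.1
      (hrp b.1.1 b.1.2 b.2.2.2.1).symm hlam.symm
    have hpaireq : (D.par a.1.1, a.1.2) = (D.par b.1.1, b.1.2) := ha.trans hb.symm
    have hpp : D.par a.1.1 = D.par b.1.1 := (Prod.ext_iff.mp hpaireq).1
    have hqq : a.1.2 = b.1.2 := (Prod.ext_iff.mp hpaireq).2
    have hsrc : D.lamI.src a.1.1 = D.lamI.src b.1.1 := by
      rw [src_eq_w0 hpart D (D.lamI.deg_src a.1.1) a.2.2.1 a.2.2.2.1,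
        src_eq_w0 hpart D (D.lamI.deg_src b.1.1) b.2.2.1 b.2.2.2.1, hqq]
    exact Subtype.ext (Prod.ext (parsrc_inj D hpp hsrc) hqq)
  · rintro ⟨⟨p', α⟩, ⟨hp', hsc'⟩, hα, hrα, hsα⟩
    have hdlam : Λ.deg (Λ.comp p' α) = e k i + e k j := by
      rw [Λ.deg_comp p' α hrα.symm, hp', hα, add_comm]
    obtain ⟨hμ, hν, hsr, hcomp⟩ := fac_spec (Λ.comp p' α) (e k i) (e k j) hdlam
    set μ := (fac (Λ.comp p' α) (e k i) (e k j) hdlam).1 with hμdef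
    set ν := (fac (Λ.comp p' α) (e k i) (e k j) hdlam).2 with hνdef
    have hw0 : D.par (w0 D ν) = Λ.src μ := (par_w0 hpart D ν).trans hsr.symm
    obtain ⟨hparq, hsrcq⟩ := lift_spec D μ (w0 D ν) (w0_deg D ν) hw0
    set q := lift D μ (w0 D ν) (w0_deg D ν) hw0 with hqdef
    have hsν : Λ.src ν = u.1 := by
      have h1 : Λ.src (Λ.comp μ ν) = Λ.src ν := Λ.src_comp μ ν hsr
      rw [hcomp, Λ.src_comp p' α hrα.symm, hsα] at h1
      exact h1.symm
    have hrμ : Λ.rng μ = Λ.rng p' := by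
      have h1 : Λ.rng (Λ.comp μ ν) = Λ.rng μ := Λ.rng_comp μ ν hsr
      rw [hcomp, Λ.rng_comp p' α hrα.symm] at h1
      exact h1.symm
    have hrpx : Λ.rng p' = D.par x.1 := rng_of_scond hpart D hsc'
    have hedgeq : Λ.IsEdge (D.par q) := ⟨i, by rw [hparq]; exact hμ⟩
    have hrngq : D.lamI.rng q = x.1 := by
      apply rng_lift_eq D x.2 hedgeq (by rw [hparq, hrμ, hrpx])
      · intro hx1
        have hp'E1 : p' ∈ E1 := (scond_v1 D p').mp (hx1 ▸ hsc')
        have hrpv : Λ.rng p' = v := rng_of_mem hpart (Set.mem_union_left _ hp'E1)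
        have hμmem : μ ∈ E1 ∪ E2 := mem_union_of hpart ⟨i, hμ⟩ (hrμ.trans hrpv)
        have hpair := pairing_iff hpart hμmem (Set.mem_union_left _ hp'E1) ⟨j, hν⟩
          ⟨i, hα⟩ hsr hrα.symm hcomp
        rw [hparq]; exact hpair.1.mpr hp'E1
      · intro hx2
        have hp'E2 : p' ∈ E2 := (scond_v2 D p').mp (hx2 ▸ hsc')
        have hrpv : Λ.rng p' = v := rng_of_mem hpart (Set.mem_union_right _ hp'E2)
        have hμmem : μ ∈ E1 ∪ E2 := mem_union_of hpart ⟨i, hμ⟩ (hrμ.trans hrpv)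
        have hpair := pairing_iff hpart hμmem (Set.mem_union_right _ hp'E2) ⟨j, hν⟩
          ⟨i, hα⟩ hsr hrα.symm hcomp
        rw [hparq]; exact hpair.2.mpr hp'E2
    have hdegq : D.lamI.deg q = e k i := by rw [D.par_deg, hparq]; exact hμ
    have hscν : Scond D (D.lamI.src q) ν := by rw [hsrcq]; exact scond_w0 hpart D hν
    refine ⟨⟨(q, ν), ⟨hdegq, hrngq⟩, hν, hscν, hsν⟩, ?_⟩
    apply Subtype.ext
    show fac (Λ.comp (D.par q) ν) (e k j) (e k i) (hdeg q ν hdegq hν hscν) = (p', α)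
    exact (fac_unique (hdeg q ν hdegq hν hscν) hp' hα hrα.symm
      (by rw [hparq]; exact hcomp.symm)).symm

end AuxK

/-- **Statement 14.** For the in-split `Λ_I` of `Λ` at `v`, the matrices `R` and `S` satisfy
`RS = A_{e_j}`, `SR = B_{e_j}` and intertwine the coordinate vertex matrices:
`A_{e_i}R = RB_{e_i}`, `B_{e_i}S = SA_{e_i}` for all `i`. -/
theorem insplit_matrices (hΛ : Λ.RowFiniteNoSources)
    (hpart : Λ.IsPairingPartition v E1 E2)
    (D : Λ.InSplitData v hv E1 E2)
    [Fintype Λ.Vertex] [Fintype D.lamI.Vertex] (j : Fin k) :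
    insplitR Λ D * insplitS Λ D j = Λ.vertexMatrix (e k j) ∧
    insplitS Λ D j * insplitR Λ D = D.lamI.vertexMatrix (e k j) ∧
    (∀ i : Fin k,
      Λ.vertexMatrix (e k i) * insplitR Λ D = insplitR Λ D * D.lamI.vertexMatrix (e k i)) ∧
    (∀ i : Fin k,
      D.lamI.vertexMatrix (e k i) * insplitS Λ D j =
        insplitS Λ D j * Λ.vertexMatrix (e k i)) := by
  refine ⟨?_, ?_, ?_, ?_⟩
  · -- RS = A
    ext u w
    rw [Matrix.mul_apply]
    have hre : ∀ x : D.lamI.Vertex, insplitR Λ D u x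
        = if u.1 = D.par x.1 then 1 else 0 := fun _ => rfl
    simp_rw [hre]
    by_cases hu : u.1 = v
    · refine (sum_fiber_v D hu fun x => insplitS Λ D j x w).trans ?_
      rw [insplitS_vx1 D j w, insplitS_vx2 D j w, ← card_split hΛ hpart hv j w.1]
      exact card_reorder fun p => by rw [hu]
    · refine (sum_fiber_ne D hu fun x => insplitS Λ D j x w).trans ?_
      have h1 : (liftV D u).1 ≠ D.v1 := fun h => hu (by rw [← par_liftV D u, h, D.par_v1])
      have h2 : (liftV D u).1 ≠ D.v2 := fun h => hu (by rw [← par_liftV D u, h, D.par_v2])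
      rw [insplitS_ne D j h1 h2 w]
      exact card_reorder fun p => by rw [par_liftV D u]
  · -- SR = B
    ext x w
    rw [Matrix.mul_apply]
    have hre : ∀ u' : Λ.Vertex, insplitR Λ D u' w
        = if u'.1 = D.par w.1 then 1 else 0 := fun _ => rfl
    simp_rw [hre]
    refine (sum_parV D w fun u' => insplitS Λ D j x u').trans ?_
    rw [insplitS_eq D j x (parV D w)]
    exact (card_lift D w.2 (e k j) (fun q => D.lamI.rng q = x.1) (fun p => Scond D x.1 p)
      (fun q hdq _ => rng_iff_scond hpart D x (edge_par D hdq))).symm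
  · -- AR = RB
    intro i
    ext u w
    rw [Matrix.mul_apply, Matrix.mul_apply]
    have hre : ∀ x : D.lamI.Vertex, insplitR Λ D u x
        = if u.1 = D.par x.1 then 1 else 0 := fun _ => rfl
    have hre' : ∀ u' : Λ.Vertex, insplitR Λ D u' w
        = if u'.1 = D.par w.1 then 1 else 0 := fun _ => rfl
    simp_rw [hre, hre']
    refine Eq.trans (sum_parV D w fun u' => Λ.vertexMatrix (e k i) u u') ?_
    by_cases hu : u.1 = v
    · refine Eq.trans ?_ (sum_fiber_v D hu fun x => D.lamI.vertexMatrix (e k i) x w).symm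
      have hB1 : D.lamI.vertexMatrix (e k i) (vx1 D) w
          = Nat.card {p : Λ.Path // Λ.deg p = e k i ∧ p ∈ E1 ∧ Λ.src p = D.par w.1} :=
        card_lift D w.2 (e k i) (fun q => D.lamI.rng q = D.v1) (fun p => p ∈ E1)
          (fun q hdq _ => rng_iff_E1 hpart D (edge_par D hdq))
      have hB2 : D.lamI.vertexMatrix (e k i) (vx2 D) w
          = Nat.card {p : Λ.Path // Λ.deg p = e k i ∧ p ∈ E2 ∧ Λ.src p = D.par w.1} :=
        card_lift D w.2 (e k i) (fun q => D.lamI.rng q = D.v2) (fun p => p ∈ E2)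
          (fun q hdq _ => rng_iff_E2 hpart D (edge_par D hdq))
      rw [hB1, hB2, ← card_split hΛ hpart hv i (D.par w.1)]
      exact card_reorder fun p => by
        rw [hu, show (parV D w).1 = D.par w.1 from rfl]
    · refine Eq.trans ?_ (sum_fiber_ne D hu fun x => D.lamI.vertexMatrix (e k i) x w).symm
      have h1 : (liftV D u).1 ≠ D.v1 := fun h => hu (by rw [← par_liftV D u, h, D.par_v1])
      have h2 : (liftV D u).1 ≠ D.v2 := fun h => hu (by rw [← par_liftV D u, h, D.par_v2])
      have hB : D.lamI.vertexMatrix (e k i) (liftV D u) w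
          = Nat.card {p : Λ.Path // Λ.deg p = e k i ∧ Λ.rng p = u.1 ∧ Λ.src p = D.par w.1} :=
        card_lift D w.2 (e k i) (fun q => D.lamI.rng q = (liftV D u).1)
          (fun p => Λ.rng p = u.1)
          (fun q hdq _ => by
            have h := rng_iff_ne D (liftV D u).2 h1 h2 (edge_par D hdq)
            rw [par_liftV D u] at h
            exact h)
      rw [hB]
      rfl
  · -- BS = SA
    intro i
    ext x u
    rw [Matrix.mul_apply, Matrix.mul_apply]
    haveI fq : Finite {q : D.lamI.Path // D.lamI.deg q = e k i} :=
      fin_degI hΛ D (e k i) _ fun _ h => h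
    haveI fp : Finite {p : Λ.Path // Λ.deg p = e k j} := fin_deg hΛ (e k j) _ fun _ h => h
    haveI fp' : Finite {p : Λ.Path // Λ.deg p = e k i} := fin_deg hΛ (e k i) _ fun _ h => h
    have hfin1 : Finite {qp : D.lamI.Path × Λ.Path //
        (fun q => D.lamI.deg q = e k i ∧ D.lamI.rng q = x.1) qp.1 ∧
        (fun (x' : D.lamI.Vertex) (p : Λ.Path) =>
          Λ.deg p = e k j ∧ Scond D x'.1 p ∧ Λ.src p = u.1) (D.lamI.srcV qp.1) qp.2} := by
      apply Finite.of_injective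
        (β := {q : D.lamI.Path // D.lamI.deg q = e k i} × {p : Λ.Path // Λ.deg p = e k j})
        (fun a => (⟨a.1.1, a.2.1.1⟩, ⟨a.1.2, a.2.2.1⟩))
      intro a b h
      exact Subtype.ext (Prod.ext (congrArg (fun z => z.1.1) h) (congrArg (fun z => z.2.1) h))
    have hfin2 : Finite {pa : Λ.Path × Λ.Path //
        (fun p' => Λ.deg p' = e k j ∧ Scond D x.1 p') pa.1 ∧
        (fun (u' : Λ.Vertex) (α : Λ.Path) =>
          Λ.deg α = e k i ∧ Λ.rng α = u'.1 ∧ Λ.src α = u.1) (Λ.srcV pa.1) pa.2} := by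
      apply Finite.of_injective
        (β := {p : Λ.Path // Λ.deg p = e k j} × {p : Λ.Path // Λ.deg p = e k i})
        (fun a => (⟨a.1.1, a.2.1.1⟩, ⟨a.1.2, a.2.2.1⟩))
      intro a b h
      exact Subtype.ext (Prod.ext (congrArg (fun z => z.1.1) h) (congrArg (fun z => z.2.1) h))
    have e1 : (∑ x' : D.lamI.Vertex, D.lamI.vertexMatrix (e k i) x x' * insplitS Λ D j x' u)
        = ∑ x' : D.lamI.Vertex,
            Nat.card {q : D.lamI.Path //
              (D.lamI.deg q = e k i ∧ D.lamI.rng q = x.1) ∧ D.lamI.srcV q = x'}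
            * Nat.card {p : Λ.Path // Λ.deg p = e k j ∧ Scond D x'.1 p ∧ Λ.src p = u.1} :=
      Finset.sum_congr rfl fun x' _ => by
        rw [insplitS_eq D j x' u]
        congr 1
        exact card_reorder fun q =>
          ⟨fun h => ⟨⟨h.1, h.2.1⟩, Subtype.ext h.2.2⟩,
           fun h => ⟨h.1.1, h.1.2, congrArg Subtype.val h.2⟩⟩
    have e2 : (∑ u' : Λ.Vertex, insplitS Λ D j x u' * Λ.vertexMatrix (e k i) u' u)
        = ∑ u' : Λ.Vertex,
            Nat.card {p' : Λ.Path // (Λ.deg p' = e k j ∧ Scond D x.1 p') ∧ Λ.srcV p' = u'}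
            * Nat.card {α : Λ.Path // Λ.deg α = e k i ∧ Λ.rng α = u'.1 ∧ Λ.src α = u.1} :=
      Finset.sum_congr rfl fun u' _ => by
        rw [insplitS_eq D j x u']
        congr 1
        exact card_reorder fun p =>
          ⟨fun h => ⟨⟨h.1, h.2.1⟩, Subtype.ext h.2.2⟩,
           fun h => ⟨h.1.1, h.1.2, congrArg Subtype.val h.2⟩⟩
    refine e1.trans (Eq.trans ?_ e2.symm)
    refine ((card_pairs (fun q => D.lamI.deg q = e k i ∧ D.lamI.rng q = x.1)
        (fun (x' : D.lamI.Vertex) (p : Λ.Path) =>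
          Λ.deg p = e k j ∧ Scond D x'.1 p ∧ Λ.src p = u.1)
        D.lamI.srcV hfin1).symm.trans ?_)
    refine Eq.trans ?_ (card_pairs (fun p' => Λ.deg p' = e k j ∧ Scond D x.1 p')
        (fun (u' : Λ.Vertex) (α : Λ.Path) =>
          Λ.deg α = e k i ∧ Λ.rng α = u'.1 ∧ Λ.src α = u.1)
        Λ.srcV hfin2)
    exact cardP1P2 hpart D i j x u


end KPaper
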